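/- arXiv:1805.04486 — 2 statements merged into one kernel-verified Lean document; each statement's English description precedes it below -/
import Mathlib

section
/- For m ≥ 1 and k ≥ 0, the k-th moment of the sum S_m of m independent uniform [0,1] random variables equals S(m+k,m)/C(m+k,m), where S(·,·) is the Stirling number of the second kind. -/
/-!
Splitting off one coordinate, `E[(S_m + U)^k] = E[(S_m + 1)^(k+1) - S_m^(k+1)] / (k+1)
= Σ_{j ≤ k} C(k+1, j) E[S_m^j] / (k+1)`, a recursion in `m` starting from `S_0 = 0`.
The ratios `S(m+k, m) / C(m+k, m)` obey the same recursion: after clearing the binomial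
coefficients it becomes `(m+1) S(n, m+1) = Σ_{i < n} C(n, i) S(i, m)`, a form of the classical
`S(n+1, m+1) = Σ_i C(n, i) S(i, m)` (the elements outside the block of the last one form the
other `m` blocks).
-/

open MeasureTheory Finset

def stirlingSnd : ℕ → ℕ → ℕ
  | 0, 0 => 1
  | 0, _ + 1 => 0
  | _ + 1, 0 => 0
  | n + 1, k + 1 => (k + 1) * stirlingSnd n (k + 1) + stirlingSnd n k

theorem stirlingSnd_eq_stirlingSecond : ∀ n k, stirlingSnd n k = Nat.stirlingSecond n k
  | 0, 0 | 0, _ + 1 | _ + 1, 0 => rfl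
  | n + 1, k + 1 => by
    rw [stirlingSnd, Nat.stirlingSecond_succ_succ, stirlingSnd_eq_stirlingSecond n (k + 1),
      stirlingSnd_eq_stirlingSecond n k]

theorem Finset.sum_range_succ_choose_smul {M : Type*} [AddCommMonoid M] (f : ℕ → M) (n : ℕ) :
    ∑ i ∈ range (n + 2), (n + 1).choose i • f i
      = ∑ i ∈ range (n + 1), n.choose i • (f i + f (i + 1)) := by
  have hshift : ∑ i ∈ range (n + 1), n.choose i • f i
      = ∑ i ∈ range (n + 1), n.choose (i + 1) • f (i + 1) + f 0 := by
    rw [sum_range_succ' _ n, sum_range_succ _ n, Nat.choose_succ_self, zero_smul, add_zero,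
      Nat.choose_zero_right, one_smul]
  rw [sum_range_succ', Nat.choose_zero_right, one_smul]
  simp only [Nat.choose_succ_succ, add_smul, smul_add, sum_add_distrib]
  rw [hshift]
  abel

namespace Nat

theorem stirlingSecond_succ_eq_sum_choose_mul (n k : ℕ) :
    stirlingSecond (n + 1) (k + 1) = ∑ i ∈ range (n + 1), n.choose i * stirlingSecond i k := by
  induction n generalizing k with
  | zero => cases k <;> rfl
  | succ n ih =>
    have hpascal := sum_range_succ_choose_smul (fun i => stirlingSecond i k) n
    simp only [smul_eq_mul] at hpascal
    rw [hpascal]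
    simp only [mul_add, sum_add_distrib, ← ih]
    cases k with
    | zero => simp [stirlingSecond_succ_succ]
    | succ k =>
      simp only [stirlingSecond_succ_succ _ k, mul_add, sum_add_distrib, mul_left_comm _ (k + 1),
        ← mul_sum]
      rw [← ih, ← ih, stirlingSecond_succ_succ (n + 1) (k + 1)]
      ring

theorem succ_mul_stirlingSecond_succ_eq_sum (n k : ℕ) :
    (k + 1) * stirlingSecond n (k + 1) = ∑ i ∈ range n, n.choose i * stirlingSecond i k := by
  have := stirlingSecond_succ_eq_sum_choose_mul n k
  rw [sum_range_succ, Nat.choose_self, one_mul, stirlingSecond_succ_succ] at this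
  omega

theorem succ_mul_stirlingSecond_add (m r : ℕ) :
    (m + 1) * stirlingSecond (m + r) (m + 1)
      = ∑ j ∈ range r, (m + r).choose (m + j) * stirlingSecond (m + j) m := by
  have hlow : ∑ i ∈ Ico 0 m, (m + r).choose i * stirlingSecond i m = 0 :=
    sum_eq_zero fun i hi => by rw [stirlingSecond_eq_zero_of_lt (mem_Ico.1 hi).2, mul_zero]
  rw [succ_mul_stirlingSecond_succ_eq_sum, range_eq_Ico,
    ← sum_Ico_consecutive _ (zero_le m) (le_add_right m r), hlow, zero_add, sum_Ico_eq_sum_range,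
    Nat.add_sub_cancel_left]

theorem succ_mul_choose_mul_choose (m k j : ℕ) :
    (k + 1) * ((m + k + 1).choose (m + j) * (m + j).choose m)
      = (m + 1) * (m + k + 1).choose (m + 1) * (k + 1).choose j := by
  rw [choose_mul (le_add_right m j), mul_comm (m + 1), choose_succ_right_eq,
    show m + k + 1 - m = k + 1 by omega, Nat.add_sub_cancel_left]
  ring

end Nat

noncomputable def irwinHallMoment (m k : ℕ) : ℝ :=
  (Nat.stirlingSecond (m + k) m : ℝ) / ((m + k).choose m : ℝ)

theorem irwinHallMoment_zero_left (k : ℕ) : irwinHallMoment 0 k = 0 ^ k := by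
  cases k <;> simp [irwinHallMoment]

theorem succ_mul_irwinHallMoment_succ (m k : ℕ) :
    (k + 1) * irwinHallMoment (m + 1) k
      = ∑ j ∈ range (k + 1), ((k + 1).choose j : ℝ) * irwinHallMoment m j := by
  have hC : ((m + k + 1).choose (m + 1) : ℝ) ≠ 0 := by
    exact_mod_cast (Nat.choose_pos (by omega)).ne'
  have hterm (j : ℕ) : ((k + 1).choose j : ℝ) * irwinHallMoment m j
      = (k + 1) / ((m + 1) * (m + k + 1).choose (m + 1))
        * ((m + k + 1).choose (m + j) * Nat.stirlingSecond (m + j) m) := by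
    have hCj : ((m + j).choose m : ℝ) ≠ 0 := by exact_mod_cast (Nat.choose_pos (by omega)).ne'
    have hchoose : ((k + 1) * ((m + k + 1).choose (m + j) * (m + j).choose m) : ℝ)
        = (m + 1) * (m + k + 1).choose (m + 1) * (k + 1).choose j := by
      exact_mod_cast Nat.succ_mul_choose_mul_choose m k j
    rw [irwinHallMoment]
    field_simp
    linear_combination (-(Nat.stirlingSecond (m + j) m : ℝ)) * hchoose
  rw [sum_congr rfl fun j _ => hterm j, ← mul_sum]
  have hsum : ((m + 1) * Nat.stirlingSecond (m + k + 1) (m + 1) : ℝ)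
      = ∑ j ∈ range (k + 1),
          ((m + k + 1).choose (m + j) * Nat.stirlingSecond (m + j) m : ℝ) := by
    exact_mod_cast Nat.succ_mul_stirlingSecond_add m (k + 1)
  rw [← hsum, irwinHallMoment, show m + 1 + k = m + k + 1 by ring]
  field_simp

theorem integral_comp_sum_pi_fin_succ {E : Type*} [NormedAddCommGroup E] [NormedSpace ℝ E]
    {ν : Measure ℝ} [SigmaFinite ν] {m : ℕ} {g : ℝ → E}
    (hg : Integrable (fun x : Fin (m + 1) → ℝ => g (∑ i, x i)) (Measure.pi fun _ => ν)) :
    ∫ x : Fin (m + 1) → ℝ, g (∑ i, x i) ∂(Measure.pi fun _ => ν)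
      = ∫ y : Fin m → ℝ, ∫ t, g (t + ∑ i, y i) ∂ν ∂(Measure.pi fun _ => ν) := by
  have hmp := measurePreserving_piFinSuccAbove (fun _ : Fin (m + 1) => ν) 0
  have hsplit : (fun z : ℝ × (Fin m → ℝ) => g (z.1 + ∑ i, z.2 i))
      ∘ MeasurableEquiv.piFinSuccAbove (fun _ => ℝ) 0 = fun x => g (∑ i, x i) := by
    ext x
    simp [MeasurableEquiv.piFinSuccAbove, Fin.sum_univ_succ, Fin.tail]
  have hint := (hmp.integrable_comp_emb (MeasurableEquiv.measurableEmbedding _)).1 (hsplit ▸ hg)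
  rw [← hsplit]
  exact (hmp.integral_comp' _).trans (integral_prod_symm _ hint)

theorem integral_add_pow_Icc (s : ℝ) (k : ℕ) :
    ∫ t, (t + s) ^ k ∂volume.restrict (Set.Icc 0 1)
      = (∑ j ∈ range (k + 1), ((k + 1).choose j : ℝ) * s ^ j) / (k + 1) := by
  rw [integral_Icc_eq_integral_Ioc, ← intervalIntegral.integral_of_le zero_le_one,
    intervalIntegral.integral_comp_add_right (· ^ k), integral_pow, zero_add, add_comm 1 s,
    add_pow, sum_range_succ]
  simp [mul_comm]

theorem integrable_sum_pow_pi_Icc (m k : ℕ) :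
    Integrable (fun x : Fin m → ℝ => (∑ i, x i) ^ k)
      (Measure.pi fun _ => volume.restrict (Set.Icc (0 : ℝ) 1)) := by
  rw [← Measure.restrict_pi_pi, ← volume_pi]
  exact (by fun_prop : Continuous fun x : Fin m → ℝ => (∑ i, x i) ^ k).continuousOn
    |>.integrableOn_compact (isCompact_univ_pi fun _ => isCompact_Icc)

theorem integral_sum_pow_pi_Icc (m k : ℕ) :
    ∫ x : Fin m → ℝ, (∑ i, x i) ^ k
        ∂(Measure.pi fun _ => volume.restrict (Set.Icc (0 : ℝ) 1)) = irwinHallMoment m k := by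
  induction m generalizing k with
  | zero => simp [irwinHallMoment_zero_left, measureReal_def]
  | succ m ih =>
    rw [integral_comp_sum_pi_fin_succ (g := (· ^ k)) (integrable_sum_pow_pi_Icc _ k)]
    simp_rw [integral_add_pow_Icc]
    rw [integral_div, integral_finsetSum _ fun j _ => (integrable_sum_pow_pi_Icc m j).const_mul _]
    simp_rw [integral_const_mul, ih]
    rw [← succ_mul_irwinHallMoment_succ]
    field_simp

theorem moment_sum_uniform_general
    {Ω : Type*} [MeasurableSpace Ω] (μ : Measure Ω) [IsProbabilityMeasure μ]
    (m : ℕ) (k : ℕ) (U : Fin m → Ω → ℝ) (hmeas : ∀ i, Measurable (U i))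
    (hindep : ProbabilityTheory.iIndepFun U μ)
    (hunif : ∀ i, Measure.map (U i) μ = volume.restrict (Set.Icc (0:ℝ) 1)) :
    ∫ ω, (∑ i, U i ω) ^ k ∂μ = (stirlingSnd (m + k) m : ℝ) / ((m + k).choose m : ℝ) := by
  have hlaw : μ.map (fun ω i => U i ω)
      = Measure.pi fun _ => volume.restrict (Set.Icc (0 : ℝ) 1) := by
    rw [(ProbabilityTheory.iIndepFun_iff_map_fun_eq_pi_map fun i => (hmeas i).aemeasurable).1
      hindep]
    simp_rw [hunif]
  rw [← integral_map (f := fun x : Fin m → ℝ => (∑ i, x i) ^ k)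
    (measurable_pi_lambda _ hmeas).aemeasurable (by fun_prop), hlaw, integral_sum_pow_pi_Icc,
    stirlingSnd_eq_stirlingSecond, irwinHallMoment]

theorem moment_sum_uniform
    {Ω : Type*} [MeasurableSpace Ω] (μ : Measure Ω) [IsProbabilityMeasure μ]
    (m : ℕ) (hm : 1 ≤ m) (k : ℕ) (U : Fin m → Ω → ℝ) (hmeas : ∀ i, Measurable (U i))
    (hindep : ProbabilityTheory.iIndepFun U μ)
    (hunif : ∀ i, Measure.map (U i) μ = volume.restrict (Set.Icc (0:ℝ) 1)) :
    ∫ ω, (∑ i, U i ω) ^ k ∂μ = (stirlingSnd (m + k) m : ℝ) / ((m + k).choose m : ℝ) :=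
  moment_sum_uniform_general μ m k U hmeas hindep hunif
end

section
/- For all n ≥ 0, ∑_{k=0}^n C(n,k) c_k c_{n-k} = ∫_0^2 (θ)_n ρ_2(θ) dθ, where ρ_2(θ) = θ for θ ∈ [0,1] and ρ_2(θ) = 2-θ for θ ∈ [1,2], and (c_n) are the Cauchy numbers. -/
/-!
Vandermonde's identity for falling factorials, `(x + y)_n = ∑ C(n,k) (x)_k (y)_{n-k}`, turns
the left-hand side into `∫∫_{[0,1]²} (x + y)_n`, the mean of `(U + V)_n` for independent
uniform `U, V`, and `ρ₂` is the density of `U + V`. Concretely, for continuous `f` with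
antiderivative `F`, both `∫∫_{[0,1]²} f (x + y)` and `∫_0^2 f ρ₂` equal `∫_1^2 F - ∫_0^1 F`:
the first by the fundamental theorem of calculus in the inner integral, the second by
integrating by parts against `ρ₂`, whose derivative is `1` on `(0,1)` and `-1` on `(1,2)`.
-/

open Finset

/-- Falling factorial `(θ)_n = θ(θ-1)⋯(θ-n+1)`. -/
noncomputable def fallFac (θ : ℝ) (n : ℕ) : ℝ := ∏ i ∈ Finset.range n, (θ - i)

/-- Cauchy numbers `c n = ∫_0^1 (θ)_n dθ`. -/
noncomputable def cauchy (n : ℕ) : ℝ := ∫ θ in (0:ℝ)..1, fallFac θ n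

/-- Triangular density on `[0,2]`. -/
noncomputable def rhoTwo (θ : ℝ) : ℝ := if θ ≤ 1 then θ else 2 - θ

open intervalIntegral
open MeasureTheory (volume)

lemma fallFac_eq_smeval_descPochhammer (θ : ℝ) (n : ℕ) :
    fallFac θ n = (descPochhammer ℤ n).smeval θ := by
  induction n with
  | zero => simp [fallFac, Polynomial.smeval_one]
  | succ n ih =>
    rw [descPochhammer_succ_right, Polynomial.smeval_mul, ← ih]
    simp [fallFac, prod_range_succ, Polynomial.smeval_sub, Polynomial.smeval_X,
      Polynomial.smeval_natCast]

lemma fallFac_add (x y : ℝ) (n : ℕ) :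
    fallFac (x + y) n =
      ∑ k ∈ range (n + 1), (n.choose k : ℝ) * (fallFac x k * fallFac y (n - k)) := by
  have h := Ring.descPochhammer_smeval_add n (Commute.all x y)
  rw [Nat.sum_antidiagonal_eq_sum_range_succ_mk] at h
  simpa [fallFac_eq_smeval_descPochhammer] using h

lemma continuous_fallFac (n : ℕ) : Continuous fun θ : ℝ => fallFac θ n :=
  continuous_finsetProd _ fun _ _ => continuous_id.sub continuous_const

lemma rhoTwo_eq_min (θ : ℝ) : rhoTwo θ = min θ (2 - θ) := by
  unfold rhoTwo
  split_ifs with h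
  · exact (min_eq_left (by linarith)).symm
  · exact (min_eq_right (by linarith)).symm

lemma continuous_rhoTwo : Continuous rhoTwo := by
  rw [funext rhoTwo_eq_min]
  fun_prop

lemma integral_integral_fallFac_add (n : ℕ) :
    ∫ x in (0:ℝ)..1, ∫ y in (0:ℝ)..1, fallFac (x + y) n =
      ∑ k ∈ range (n + 1), (n.choose k : ℝ) * cauchy k * cauchy (n - k) := by
  have hint : ∀ k (a b : ℝ), IntervalIntegrable (fun θ => fallFac θ k) volume a b :=
    fun k _ _ => (continuous_fallFac k).intervalIntegrable _ _
  simp_rw [fallFac_add, integral_finsetSum (fun k _ => ((hint _ _ _).const_mul _).const_mul _),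
    integral_const_mul]
  rw [integral_finsetSum (fun k _ => ((hint _ _ _).mul_const _).const_mul _)]
  simp_rw [integral_const_mul, integral_mul_const, mul_assoc]
  rfl

section Antiderivative

variable {f F : ℝ → ℝ}

lemma integral_integral_comp_add_eq_sub (hf : Continuous f) (hF : ∀ x, HasDerivAt F (f x) x) :
    ∫ x in (0:ℝ)..1, ∫ y in (0:ℝ)..1, f (x + y) =
      (∫ x in (1:ℝ)..2, F x) - ∫ x in (0:ℝ)..1, F x := by
  have hFc : Continuous F := continuous_iff_continuousAt.2 fun x => (hF x).continuousAt
  have hinner : ∀ x : ℝ, ∫ y in (0:ℝ)..1, f (x + y) = F (x + 1) - F x := by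
    intro x
    rw [integral_comp_add_left, add_zero,
      integral_eq_sub_of_hasDerivAt (fun y _ => hF y) (hf.intervalIntegrable _ _)]
  simp_rw [hinner]
  rw [integral_sub ((by fun_prop : Continuous fun x => F (x + 1)).intervalIntegrable _ _)
    (hFc.intervalIntegrable _ _), integral_comp_add_right F]
  norm_num

lemma integral_mul_rhoTwo_eq_sub (hf : Continuous f) (hF : ∀ x, HasDerivAt F (f x) x) :
    ∫ θ in (0:ℝ)..2, f θ * rhoTwo θ =
      (∫ x in (1:ℝ)..2, F x) - ∫ x in (0:ℝ)..1, F x := by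
  have hFc : Continuous F := continuous_iff_continuousAt.2 fun x => (hF x).continuousAt
  have hrise : ∫ θ in (0:ℝ)..1, f θ * rhoTwo θ = F 1 - ∫ x in (0:ℝ)..1, F x := by
    have hparts := integral_mul_deriv_eq_deriv_mul (a := 0) (b := 1) (fun x _ => hasDerivAt_id' x)
      (fun x _ => hF x) intervalIntegrable_const (hf.intervalIntegrable _ _)
    rw [integral_congr fun θ hθ => ?_]
    · simpa using hparts
    rw [Set.uIcc_of_le zero_le_one] at hθ
    simp [rhoTwo, hθ.2, mul_comm]
  have hfall : ∫ θ in (1:ℝ)..2, f θ * rhoTwo θ = (∫ x in (1:ℝ)..2, F x) - F 1 := by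
    have hparts := integral_mul_deriv_eq_deriv_mul (a := 1) (b := 2)
      (fun x _ => (hasDerivAt_id' x).const_sub 2) (fun x _ => hF x)
      intervalIntegrable_const (hf.intervalIntegrable _ _)
    rw [integral_congr (g := fun θ => (2 - θ) * f θ) fun θ hθ => ?_, hparts]
    · norm_num [integral_neg]; ring
    rw [Set.uIcc_of_le one_le_two] at hθ
    simp [rhoTwo_eq_min, min_eq_right (by linarith [hθ.1] : 2 - θ ≤ θ), mul_comm]
  have hint := fun a b => (hf.fun_mul continuous_rhoTwo).intervalIntegrable (μ := volume) a b
  rw [← integral_add_adjacent_intervals (hint 0 1) (hint 1 2), hrise, hfall]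
  ring

end Antiderivative

lemma integral_integral_comp_add_eq_integral_mul_rhoTwo {f : ℝ → ℝ} (hf : Continuous f) :
    ∫ x in (0:ℝ)..1, ∫ y in (0:ℝ)..1, f (x + y) =
      ∫ θ in (0:ℝ)..2, f θ * rhoTwo θ := by
  have hF : ∀ x, HasDerivAt (fun u => ∫ t in (0:ℝ)..u, f t) (f x) x :=
    fun x => (hf.integral_hasStrictDerivAt 0 x).hasDerivAt
  rw [integral_integral_comp_add_eq_sub hf hF, integral_mul_rhoTwo_eq_sub hf hF]

theorem cauchy_self_convolution_integral (n : ℕ) :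
    ∑ k ∈ Finset.range (n + 1), (n.choose k : ℝ) * cauchy k * cauchy (n - k) =
      ∫ θ in (0:ℝ)..2, fallFac θ n * rhoTwo θ := by
  rw [← integral_integral_fallFac_add,
    integral_integral_comp_add_eq_integral_mul_rhoTwo (continuous_fallFac n)]
end
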